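/- arXiv:2103.10054 — 2 statements merged into one kernel-verified Lean document; each statement's English description precedes it below -/
import Mathlib

section
/- Let ζ₁⁻, …, ζ_{m-1}⁻ ∈ 𝒫_N^-, f⁺ ∈ 𝒫_N^+ with f⁺(0) ≠ 0, and let J₁,…,J_{m-1} ∈ {1,-1}. Suppose u = (u₁,…,u_m) and v = (v₁,…,v_m) in (𝒫_N^+)^m both satisfy the system: ζ_j⁻ x_m − J_j f⁺ x̃_j ∈ 𝒫^+ for j = 1,…,m−1, and Σ_{j=1}^{m-1} ζ_j⁻ x_j + f⁺ x̃_m ∈ 𝒫^+. Then Σ_{k=1}^{m-1} J_k u_k ṽ_k + ũ_m v_m is a constant function. -/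
/-- The tilde operation: `P̃(z) = Σ conj(p_k) z^{-k}`. -/
noncomputable def tilde (p : LaurentPolynomial ℂ) : LaurentPolynomial ℂ :=
  AddMonoidAlgebra.ofCoeff (Finsupp.equivMapDomain (Equiv.neg ℤ) (Finsupp.mapRange (starRingEnd ℂ) (map_zero _) p.coeff))

/-- Membership in `𝒫⁺`: no negative-index coefficients. -/
def inPplus (p : LaurentPolynomial ℂ) : Prop := ∀ n : ℤ, n < 0 → p.coeff n = 0

/-- Membership in `𝒫_N⁺`: coefficients supported in `[0, N]`. -/
def inPNplus (N : ℕ) (p : LaurentPolynomial ℂ) : Prop :=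
  ∀ n : ℤ, n < 0 ∨ (N : ℤ) < n → p.coeff n = 0

/-- Membership in `𝒫_N⁻`: coefficients supported in `[-N, 0]`. -/
def inPNminus (N : ℕ) (p : LaurentPolynomial ℂ) : Prop :=
  ∀ n : ℤ, 0 < n ∨ n < -(N : ℤ) → p.coeff n = 0

/-! ### Auxiliary lemmas about `tilde` and coefficients -/

lemma tilde_apply (p : LaurentPolynomial ℂ) (n : ℤ) :
    (tilde p).coeff n = (starRingEnd ℂ) (p.coeff (-n)) := rfl

lemma tilde_zero : tilde 0 = 0 := by
  ext n; rw [tilde_apply]; simp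

lemma tilde_add (p q : LaurentPolynomial ℂ) : tilde (p + q) = tilde p + tilde q := by
  ext n
  rw [AddMonoidAlgebra.coeff_add, Finsupp.add_apply, tilde_apply, tilde_apply, tilde_apply, AddMonoidAlgebra.coeff_add, Finsupp.add_apply, map_add]

lemma tilde_single (a : ℤ) (c : ℂ) :
    tilde (AddMonoidAlgebra.single a c : LaurentPolynomial ℂ)
      = AddMonoidAlgebra.single (-a) ((starRingEnd ℂ) c) := by
  ext n
  rw [tilde_apply]
  rw [show ((AddMonoidAlgebra.single a c : LaurentPolynomial ℂ).coeff (-n)) = Finsupp.single a c (-n) from rfl]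
  rw [show ((AddMonoidAlgebra.single (-a) ((starRingEnd ℂ) c) : LaurentPolynomial ℂ).coeff n)
        = Finsupp.single (-a) ((starRingEnd ℂ) c) n from rfl]
  rw [Finsupp.single_apply, Finsupp.single_apply]
  by_cases h : a = -n
  · simp [h]
  · have h2 : ¬(-a = n) := by omega
    simp [h, h2]

lemma LP_single_mul (x y : ℤ) (r s : ℂ) :
    (AddMonoidAlgebra.single x r : LaurentPolynomial ℂ) * AddMonoidAlgebra.single y s
      = AddMonoidAlgebra.single (x + y) (r * s) :=
  AddMonoidAlgebra.single_mul_single _ _ _ _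

lemma tilde_mul (p q : LaurentPolynomial ℂ) : tilde (p * q) = tilde p * tilde q := by
  induction p using AddMonoidAlgebra.induction_linear with
  | zero => simp [tilde_zero]
  | add f g hf hg => rw [add_mul, tilde_add, hf, hg, tilde_add, add_mul]
  | single a b =>
    induction q using AddMonoidAlgebra.induction_linear with
    | zero => simp [tilde_zero]
    | add f g hf hg => rw [mul_add, tilde_add, hf, hg, tilde_add, mul_add]
    | single c d =>
      rw [LP_single_mul, tilde_single, tilde_single, tilde_single, LP_single_mul, neg_add, map_mul]

lemma tilde_tilde (p : LaurentPolynomial ℂ) : tilde (tilde p) = p := by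
  ext n
  rw [tilde_apply, tilde_apply, neg_neg, Complex.conj_conj]

lemma tilde_C (c : ℂ) : tilde (LaurentPolynomial.C c) = LaurentPolynomial.C ((starRingEnd ℂ) c) := by
  rw [show LaurentPolynomial.C c = (AddMonoidAlgebra.single 0 c : LaurentPolynomial ℂ) from rfl,
    tilde_single]
  rfl

lemma tilde_sum {ι : Type*} (s : Finset ι) (g : ι → LaurentPolynomial ℂ) :
    tilde (∑ j ∈ s, g j) = ∑ j ∈ s, tilde (g j) := by
  classical
  induction s using Finset.induction with
  | empty => simp [tilde_zero]
  | insert _ _ h ih => simp [Finset.sum_insert h, tilde_add, ih]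

lemma C_coeff (c : ℂ) (n : ℤ) : (LaurentPolynomial.C c).coeff n = if n = 0 then c else 0 := by
  rw [show (LaurentPolynomial.C c).coeff = Finsupp.single 0 c from rfl, Finsupp.single_apply]
  simp [eq_comm]

lemma mul_vanish {p q : LaurentPolynomial ℂ} {A B : ℤ}
    (hp : ∀ a : ℤ, a < A → p.coeff a = 0) (hq : ∀ b : ℤ, b < B → q.coeff b = 0) :
    ∀ n : ℤ, n < A + B → (p * q).coeff n = 0 := by
  intro n hn
  rw [AddMonoidAlgebra.coeff_mul, Finsupp.sum]
  refine Finset.sum_eq_zero fun a _ => ?_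
  rw [Finsupp.sum]
  refine Finset.sum_eq_zero fun b _ => ?_
  split_ifs with h
  · rcases lt_or_ge a A with h1 | h1
    · simp [hp a h1]
    · simp [hq b (by omega)]
  · rfl

lemma inPplus_mul {p q : LaurentPolynomial ℂ} (hp : inPplus p) (hq : inPplus q) :
    inPplus (p * q) :=
  fun n hn => mul_vanish (A := 0) (B := 0) hp hq n (by omega)

lemma inPplus_sum {ι : Type*} (s : Finset ι) (g : ι → LaurentPolynomial ℂ)
    (h : ∀ j ∈ s, inPplus (g j)) : inPplus (∑ j ∈ s, g j) := by
  intro n hn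
  rw [AddMonoidAlgebra.coeff_sum, Finset.sum_apply']
  exact Finset.sum_eq_zero fun j hj => h j hj n hn

/-- Core argument: `Σ J_k u_k ṽ_k + ũ_m v_m ∈ 𝒫⁺`. -/
lemma key_lemma {N : ℕ} {m' : ℕ}
    (ζ : Fin m' → LaurentPolynomial ℂ)
    (f : LaurentPolynomial ℂ) (hf : inPNplus N f) (hf0 : f.coeff 0 ≠ 0)
    (J : Fin m' → ℂ)
    (u : Fin m' → LaurentPolynomial ℂ) (um : LaurentPolynomial ℂ)
    (v : Fin m' → LaurentPolynomial ℂ) (vm : LaurentPolynomial ℂ)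
    (hu : ∀ j, inPNplus N (u j)) (hum : inPNplus N um)
    (hv : ∀ j, inPNplus N (v j)) (hvm : inPNplus N vm)
    (hu2 : inPplus (∑ j, ζ j * u j + f * tilde um))
    (hv1 : ∀ j, inPplus (ζ j * vm - LaurentPolynomial.C (J j) * f * tilde (v j))) :
    inPplus ((∑ k, LaurentPolynomial.C (J k) * u k * tilde (v k)) + tilde um * vm) := by
  set S := (∑ k, LaurentPolynomial.C (J k) * u k * tilde (v k)) + tilde um * vm with hS
  have hinPp : ∀ p : LaurentPolynomial ℂ, inPNplus N p → inPplus p :=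
    fun p h n hn => h n (Or.inl hn)
  have htlow : ∀ p : LaurentPolynomial ℂ, inPNplus N p →
      ∀ b : ℤ, b < -(N : ℤ) → (tilde p).coeff b = 0 := by
    intro p h b hb
    rw [tilde_apply, h (-b) (Or.inr (by omega)), map_zero]
  have hClow : ∀ (c : ℂ) (a : ℤ), a < 0 → (LaurentPolynomial.C c).coeff a = 0 := by
    intro c a ha
    rw [C_coeff, if_neg (by omega)]
  -- S has no coefficients below -N
  have hSlow : ∀ n : ℤ, n < -(N : ℤ) → S.coeff n = 0 := by
    intro n hn
    have h1 : ∀ k : Fin m', ∀ a : ℤ, a < 0 → (LaurentPolynomial.C (J k) * u k).coeff a = 0 :=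
      fun k a ha => mul_vanish (A := 0) (B := 0) (hClow (J k)) (hinPp (u k) (hu k)) a (by omega)
    rw [hS, AddMonoidAlgebra.coeff_add, Finsupp.add_apply, AddMonoidAlgebra.coeff_sum, Finset.sum_apply']
    rw [Finset.sum_eq_zero
        (fun k _ => mul_vanish (A := 0) (B := -(N : ℤ)) (h1 k) (htlow (v k) (hv k)) n (by omega)),
      mul_vanish (A := -(N : ℤ)) (B := 0) (htlow um hum) (hinPp vm hvm) n (by omega), add_zero]
  -- algebraic identity: f S = v_m B - Σ u_j A_j
  have step : ∀ j : Fin m', f * (LaurentPolynomial.C (J j) * u j * tilde (v j))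
      = vm * (ζ j * u j) - u j * (ζ j * vm - LaurentPolynomial.C (J j) * f * tilde (v j)) :=
    fun j => by ring
  have hid : f * S = vm * ((∑ j, ζ j * u j) + f * tilde um)
      - ∑ j, u j * (ζ j * vm - LaurentPolynomial.C (J j) * f * tilde (v j)) := by
    rw [hS, mul_add, Finset.mul_sum]
    rw [Finset.sum_congr rfl fun j _ => step j]
    rw [Finset.sum_sub_distrib, mul_add, Finset.mul_sum]
    ring
  have hfS : inPplus (f * S) := by
    rw [hid]
    intro n hn
    rw [AddMonoidAlgebra.coeff_sub, Finsupp.sub_apply,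
      inPplus_mul (hinPp vm hvm) hu2 n hn,
      inPplus_sum _ _ (fun j _ => inPplus_mul (hinPp (u j) (hu j)) (hv1 j)) n hn, sub_zero]
  -- upward induction on the lowest possibly-nonzero coefficient
  have main : ∀ k : ℕ, ∀ n : ℤ, n < 0 → n < -(N : ℤ) + k → S.coeff n = 0 := by
    intro k
    induction k with
    | zero => exact fun n hn hn' => hSlow n (by omega)
    | succ k ih =>
      intro n hn hn'
      rcases lt_or_ge n (-(N : ℤ) + k) with h | h
      · exact ih n hn h
      · have hprev : ∀ m : ℤ, m < n → S.coeff m = 0 := by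
          intro m hm
          rcases lt_or_ge m (-(N : ℤ)) with h2 | h2
          · exact hSlow m h2
          · exact ih m (by omega) (by omega)
        have hsplit : ((f - LaurentPolynomial.C (f.coeff 0)) * S).coeff n = 0 := by
          refine mul_vanish (A := 1) (B := n) ?_ hprev n (by omega)
          intro a ha
          rw [AddMonoidAlgebra.coeff_sub, Finsupp.sub_apply, C_coeff]
          rcases lt_or_ge a 0 with h3 | h3
          · rw [hf a (Or.inl h3), if_neg (by omega)]; ring
          · have ha0 : a = 0 := by omega
            subst ha0; simp
        have hCS : (LaurentPolynomial.C (f.coeff 0) * S).coeff n = f.coeff 0 * S.coeff n :=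
          AddMonoidAlgebra.coeff_single_zero_mul S (f.coeff 0) n
        have h0 : (f * S).coeff n = 0 := hfS n hn
        have hmul : f.coeff 0 * S.coeff n = 0 := by
          have e : f * S = (f - LaurentPolynomial.C (f.coeff 0)) * S + LaurentPolynomial.C (f.coeff 0) * S := by
            ring
          rw [e, AddMonoidAlgebra.coeff_add, Finsupp.add_apply, hsplit, zero_add, hCS] at h0
          exact h0
        exact (mul_eq_zero.mp hmul).resolve_left hf0
  exact fun n hn => main N n hn (by omega)

/-- Lemma 1: if `u` and `v` are two (possibly identical) solutions of the system
(ζ_j⁻ x_m − J_j f⁺ x̃_j ∈ 𝒫⁺ for j = 1,…,m−1 and Σ ζ_j⁻ x_j + f⁺ x̃_m ∈ 𝒫⁺),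
then `Σ_{k} J_k u_k ṽ_k + ũ_m v_m` is constant.
Here `m' = m − 1`: `ζ, J', u, v : Fin m' → _` are the first `m−1` entries, and
`um, vm` are the `m`-th entries of the solutions. -/
theorem lemma1_const {N : ℕ} {m' : ℕ}
    (ζ : Fin m' → LaurentPolynomial ℂ) (hζ : ∀ j, inPNminus N (ζ j))
    (f : LaurentPolynomial ℂ) (hf : inPNplus N f) (hf0 : f.coeff 0 ≠ 0)
    (J : Fin m' → ℂ) (hJ : ∀ j, J j = 1 ∨ J j = -1)
    (u : Fin m' → LaurentPolynomial ℂ) (um : LaurentPolynomial ℂ)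
    (v : Fin m' → LaurentPolynomial ℂ) (vm : LaurentPolynomial ℂ)
    (hu : ∀ j, inPNplus N (u j)) (hum : inPNplus N um)
    (hv : ∀ j, inPNplus N (v j)) (hvm : inPNplus N vm)
    (hu1 : ∀ j, inPplus (ζ j * um - LaurentPolynomial.C (J j) * f * tilde (u j)))
    (hu2 : inPplus (∑ j, ζ j * u j + f * tilde um))
    (hv1 : ∀ j, inPplus (ζ j * vm - LaurentPolynomial.C (J j) * f * tilde (v j)))
    (hv2 : inPplus (∑ j, ζ j * v j + f * tilde vm)) :
    ∃ c : ℂ,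
      (∑ k, LaurentPolynomial.C (J k) * u k * tilde (v k)) + tilde um * vm
        = LaurentPolynomial.C c := by
  have hJc : ∀ k, (starRingEnd ℂ) (J k) = J k := by
    intro k
    rcases hJ k with h | h <;> simp [h]
  set S := (∑ k, LaurentPolynomial.C (J k) * u k * tilde (v k)) + tilde um * vm with hSdef
  have h1 : inPplus S :=
    key_lemma ζ f hf hf0 J u um v vm hu hum hv hvm hu2 hv1
  have h2 : inPplus ((∑ k, LaurentPolynomial.C (J k) * v k * tilde (u k)) + tilde vm * um) :=
    key_lemma ζ f hf hf0 J v vm u um hv hvm hu hum hv2 hu1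
  have htS : tilde S = (∑ k, LaurentPolynomial.C (J k) * v k * tilde (u k)) + tilde vm * um := by
    rw [hSdef, tilde_add, tilde_sum]
    congr 1
    · refine Finset.sum_congr rfl fun k _ => ?_
      rw [tilde_mul, tilde_mul, tilde_C, tilde_tilde, hJc]
      ring
    · rw [tilde_mul, tilde_tilde, mul_comm]
  refine ⟨S.coeff 0, ?_⟩
  ext n
  rw [C_coeff]
  rcases lt_trichotomy n 0 with h | h | h
  · rw [h1 n h, if_neg (by omega)]
  · subst h; simp
  · rw [if_neg (by omega)]
    have hz : (tilde S).coeff (-n) = 0 := by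
      rw [htS]
      exact h2 (-n) (by omega)
    rw [tilde_apply, neg_neg] at hz
    have h3 := congrArg (starRingEnd ℂ) hz
    rwa [Complex.conj_conj, map_zero] at h3
end

section
/- Under the hypotheses of Lemma 1 (two solutions u, v of the system), the Laurent polynomial f⁺ · (Σ_{k=1}^{m-1} J_k u_k ṽ_k + ũ_m v_m) lies in 𝒫^+. -/
lemma inPplus_add {p q : LaurentPolynomial ℂ} (hp : inPplus p) (hq : inPplus q) :
    inPplus (p + q) := fun n hn => by
  show (p + q).coeff n = 0
  rw [AddMonoidAlgebra.coeff_add, Finsupp.add_apply, hp n hn, hq n hn, add_zero]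

lemma inPplus_sub {p q : LaurentPolynomial ℂ} (hp : inPplus p) (hq : inPplus q) :
    inPplus (p - q) := fun n hn => by
  show (p - q).coeff n = 0
  rw [AddMonoidAlgebra.coeff_sub, Finsupp.sub_apply, hp n hn, hq n hn, sub_zero]

lemma inPplus_sum_s7 {k : ℕ} {s : Finset (Fin k)} {p : Fin k → LaurentPolynomial ℂ}
    (hp : ∀ j, inPplus (p j)) : inPplus (∑ j ∈ s, p j) := fun n hn => by
  rw [AddMonoidAlgebra.coeff_sum, Finsupp.finset_sum_apply]
  exact Finset.sum_eq_zero fun j _ => hp j n hn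

lemma inPNplus_inPplus {N : ℕ} {p : LaurentPolynomial ℂ} (hp : inPNplus N p) :
    inPplus p := fun n hn => hp n (Or.inl hn)

/-- Under the hypotheses of Lemma 1, the Laurent polynomial
`f⁺ ⬝ (Σ_k J_k u_k ṽ_k + ũ_m v_m)` lies in `𝒫⁺`. -/
theorem lemma1_Pplus {N : ℕ} {m' : ℕ}
    (ζ : Fin m' → LaurentPolynomial ℂ) (hζ : ∀ j, inPNminus N (ζ j))
    (f : LaurentPolynomial ℂ) (hf : inPNplus N f) (hf0 : f.coeff 0 ≠ 0)
    (J : Fin m' → ℂ) (hJ : ∀ j, J j = 1 ∨ J j = -1)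
    (u : Fin m' → LaurentPolynomial ℂ) (um : LaurentPolynomial ℂ)
    (v : Fin m' → LaurentPolynomial ℂ) (vm : LaurentPolynomial ℂ)
    (hu : ∀ j, inPNplus N (u j)) (hum : inPNplus N um)
    (hv : ∀ j, inPNplus N (v j)) (hvm : inPNplus N vm)
    (hu1 : ∀ j, inPplus (ζ j * um - LaurentPolynomial.C (J j) * f * tilde (u j)))
    (hu2 : inPplus (∑ j, ζ j * u j + f * tilde um))
    (hv1 : ∀ j, inPplus (ζ j * vm - LaurentPolynomial.C (J j) * f * tilde (v j)))
    (hv2 : inPplus (∑ j, ζ j * v j + f * tilde vm)) :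
    inPplus (f * ((∑ k, LaurentPolynomial.C (J k) * u k * tilde (v k)) + tilde um * vm)) := by
  have key : f * ((∑ k, LaurentPolynomial.C (J k) * u k * tilde (v k)) + tilde um * vm)
      = ((∑ j, ζ j * u j) + f * tilde um) * vm
        - ∑ k, u k * (ζ k * vm - LaurentPolynomial.C (J k) * f * tilde (v k)) := by
    have e1 : (∑ k, f * (LaurentPolynomial.C (J k) * u k * tilde (v k)))
        = ∑ k, u k * (LaurentPolynomial.C (J k) * f * tilde (v k)) :=
      Finset.sum_congr rfl fun k _ => by ring
    have e2 : (∑ j, ζ j * u j) * vm = ∑ j, u j * (ζ j * vm) := by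
      rw [Finset.sum_mul]; exact Finset.sum_congr rfl fun j _ => by ring
    have e3 : (∑ k, u k * (ζ k * vm - LaurentPolynomial.C (J k) * f * tilde (v k)))
        = (∑ k, u k * (ζ k * vm)) - ∑ k, u k * (LaurentPolynomial.C (J k) * f * tilde (v k)) := by
      rw [← Finset.sum_sub_distrib]; exact Finset.sum_congr rfl fun k _ => by ring
    rw [mul_add, Finset.mul_sum, e1, add_mul, e2, e3]; ring
  rw [key]
  exact inPplus_sub
    (inPplus_mul hu2 (inPNplus_inPplus hvm))
    (inPplus_sum_s7 fun k => inPplus_mul (inPNplus_inPplus (hu k)) (hv1 k))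
end
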